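/- A sequence (𝒟_m)_{m∈ℕ} of gradient discretisations is limit-conforming if and only if it is coercive and there exists a subset 𝐖̃ of 𝐖_D, dense in 𝐖_D for the norm ‖·‖_{𝐖_D}, such that W_{𝒟_m}(ψ) → 0 as m → ∞ for every ψ ∈ 𝐖̃. -/

import Mathlib

open NormedSpace Filter Topology

noncomputable section

variable {L Lv : Type*} [NormedAddCommGroup L] [NormedSpace ℝ L]
  [NormedAddCommGroup Lv] [NormedSpace ℝ Lv]

/-- The seminorm `|u|_{L,V} = sup_{μ ∈ V \ {0}} |⟨μ,u⟩| / ‖μ‖` (equal to `0` when `V = {0}`,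
since `sSup ∅ = 0` in `ℝ`). -/
noncomputable def semV (V : Submodule ℝ (StrongDual ℝ L)) (u : L) : ℝ :=
  sSup ((fun μ : StrongDual ℝ L => |μ u| / ‖μ‖) '' {μ : StrongDual ℝ L | μ ∈ V ∧ μ ≠ 0})

/-- `IsWDpair W_G G φ w` says that `φ ∈ 𝐖_D` with `D φ = w`, i.e. the abstract Stokes formula
`⟨φ, G u⟩ + ⟨w, u⟩ = 0` holds for all `u ∈ W_G`. -/
def IsWDpair (WG : Submodule ℝ L) (G : ↥WG →ₗ[ℝ] Lv) (φ : StrongDual ℝ Lv) (w : StrongDual ℝ L) : Prop :=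
  ∀ u : ↥WG, φ (G u) + w (u : L) = 0

/-- A gradient discretisation `𝒟 = (X_𝒟, P_𝒟, G_𝒟)`: a finite-dimensional real vector space
`X`, a function reconstruction `P : X → L` and a gradient reconstruction `Gd : X → Lv`, such
that `v ↦ (|P v|_{L,V}^p + ‖Gd v‖^p)^{1/p}` is a norm on `X` (definiteness is the only
non-automatic condition). -/
structure GradDisc (L Lv : Type*) [NormedAddCommGroup L] [NormedSpace ℝ L]
    [NormedAddCommGroup Lv] [NormedSpace ℝ Lv]
    (V : Submodule ℝ (StrongDual ℝ L)) (p : ℝ) where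
  X : Type
  [instAddCommGroup : AddCommGroup X]
  [instModule : Module ℝ X]
  [instFin : FiniteDimensional ℝ X]
  P : X →ₗ[ℝ] L
  Gd : X →ₗ[ℝ] Lv
  dnorm_definite : ∀ v : X, (semV V (P v) ^ p + ‖Gd v‖ ^ p) ^ (1 / p) = 0 → v = 0

attribute [instance] GradDisc.instAddCommGroup GradDisc.instModule GradDisc.instFin

namespace GradDisc

variable {V : Submodule ℝ (StrongDual ℝ L)} {p : ℝ}

/-- The discrete norm `‖v‖_𝒟 = (|P_𝒟 v|_{L,V}^p + ‖G_𝒟 v‖_Lv^p)^{1/p}`. -/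
noncomputable def dnorm (D : GradDisc L Lv V p) (v : D.X) : ℝ :=
  (semV V (D.P v) ^ p + ‖D.Gd v‖ ^ p) ^ (1 / p)

/-- `C_𝒟 = max_{v ≠ 0} ‖P_𝒟 v‖_L / ‖v‖_𝒟`. -/
noncomputable def CD (D : GradDisc L Lv V p) : ℝ :=
  sSup ((fun v : D.X => ‖D.P v‖ / D.dnorm v) '' {v : D.X | v ≠ 0})

/-- `W_𝒟(φ) = sup_{u ≠ 0} |⟨φ, G_𝒟 u⟩ + ⟨D φ, P_𝒟 u⟩| / ‖u‖_𝒟`, where `w = D φ`. -/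
noncomputable def WDdef (D : GradDisc L Lv V p) (φ : StrongDual ℝ Lv) (w : StrongDual ℝ L) : ℝ :=
  sSup ((fun u : D.X => |φ (D.Gd u) + w (D.P u)| / D.dnorm u) '' {u : D.X | u ≠ 0})

/-- `S_𝒟(φ) = min_v (‖P_𝒟 v − φ‖_L + ‖G_𝒟 v − G φ‖_Lv)`, where `gφ = G φ`. -/
noncomputable def SDdef (D : GradDisc L Lv V p) (φ : L) (gφ : Lv) : ℝ :=
  sInf (Set.range fun v : D.X => ‖D.P v - φ‖ + ‖D.Gd v - gφ‖)

end GradDisc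

/-- Coercivity of a sequence of gradient discretisations: `sup_m C_{𝒟_m} < ∞`. -/
def Coercive {V : Submodule ℝ (StrongDual ℝ L)} {p : ℝ} (D : ℕ → GradDisc L Lv V p) : Prop :=
  ∃ C : ℝ, ∀ m : ℕ, (D m).CD ≤ C

/-- Limit-conformity: `W_{𝒟_m}(φ) → 0` for every `φ ∈ 𝐖_D` (with `w = D φ`). -/
def LimitConforming (WG : Submodule ℝ L) (G : ↥WG →ₗ[ℝ] Lv)
    {V : Submodule ℝ (StrongDual ℝ L)} {p : ℝ} (D : ℕ → GradDisc L Lv V p) : Prop :=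
  ∀ (φ : StrongDual ℝ Lv) (w : StrongDual ℝ L), IsWDpair WG G φ w →
    Filter.Tendsto (fun m => (D m).WDdef φ w) Filter.atTop (𝓝 0)

/-- Consistency: `S_{𝒟_m}(φ) → 0` for every `φ ∈ W_G`. -/
def Consistent (WG : Submodule ℝ L) (G : ↥WG →ₗ[ℝ] Lv)
    {V : Submodule ℝ (StrongDual ℝ L)} {p : ℝ} (D : ℕ → GradDisc L Lv V p) : Prop :=
  ∀ u : ↥WG, Filter.Tendsto (fun m => (D m).SDdef (u : L) (G u)) Filter.atTop (𝓝 0)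

/-- Compactness: bounded discrete sequences have relatively compact reconstructions in `L`. -/
def CompactSeq {V : Submodule ℝ (StrongDual ℝ L)} {p : ℝ} (D : ℕ → GradDisc L Lv V p) : Prop :=
  ∀ u : (m : ℕ) → (D m).X, (∃ C : ℝ, ∀ m : ℕ, (D m).dnorm (u m) ≤ C) →
    IsCompact (closure (Set.range fun m => (D m).P (u m)))

/-!
For the converse, `(𝐯, D𝐯) ↦ W_𝒟(𝐯)` is Lipschitz on `𝐋′ × L′` with constant `max(1, C_𝒟)`, which
coercivity bounds uniformly in `m`, so convergence on a dense subset propagates to all of `𝐖_D`.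

For the direct implication, limit-conformity makes the functionals
`𝐯 ↦ (⟨𝐯, G_𝒟 u⟩ + ⟨D𝐯, P_𝒟 u⟩) / ‖u‖_𝒟` pointwise bounded on the Banach space `𝐖_D`, hence
uniformly bounded by Banach–Steinhaus. By Hahn–Banach, this bounds the distance from
`(P_𝒟 u, G_𝒟 u)` to the graph of `G` by a multiple of `‖u‖_𝒟`, and the norm equivalence on `W_G`
turns that into a bound on `‖P_𝒟 u‖_L`.
-/

theorem le_rpow_add_rpow_rpow_one_div_left {p a b : ℝ} (hp : 0 < p) (ha : 0 ≤ a) (hb : 0 ≤ b) :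
    a ≤ (a ^ p + b ^ p) ^ (1 / p) :=
  calc a = (a ^ p) ^ (1 / p) := by rw [one_div, Real.rpow_rpow_inv ha hp.ne']
    _ ≤ (a ^ p + b ^ p) ^ (1 / p) := by
      gcongr
      exact le_add_of_nonneg_right (Real.rpow_nonneg hb p)

theorem le_rpow_add_rpow_rpow_one_div_right {p a b : ℝ} (hp : 0 < p) (ha : 0 ≤ a) (hb : 0 ≤ b) :
    b ≤ (a ^ p + b ^ p) ^ (1 / p) := by
  rw [add_comm]
  exact le_rpow_add_rpow_rpow_one_div_left hp hb ha

theorem rpow_add_rpow_rpow_one_div_le_of_le {p a b a' b' : ℝ} (hp : 0 < p) (ha : 0 ≤ a)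
    (hb : 0 ≤ b) (haa' : a ≤ a') (hbb' : b ≤ b') :
    (a ^ p + b ^ p) ^ (1 / p) ≤ (a' ^ p + b' ^ p) ^ (1 / p) := by
  gcongr

theorem mul_rpow_add_mul_rpow_rpow_one_div {p c a b : ℝ} (hp : 0 < p) (hc : 0 ≤ c) (ha : 0 ≤ a)
    (hb : 0 ≤ b) : ((c * a) ^ p + (c * b) ^ p) ^ (1 / p) = c * (a ^ p + b ^ p) ^ (1 / p) := by
  rw [Real.mul_rpow hc ha, Real.mul_rpow hc hb, ← mul_add,
    Real.mul_rpow (by positivity) (by positivity), one_div, Real.rpow_rpow_inv hc hp.ne']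

theorem add_rpow_add_rpow_rpow_one_div_le {p a b c d : ℝ} (hp : 1 ≤ p) (ha : 0 ≤ a) (hb : 0 ≤ b)
    (hc : 0 ≤ c) (hd : 0 ≤ d) :
    ((a + c) ^ p + (b + d) ^ p) ^ (1 / p) ≤
      (a ^ p + b ^ p) ^ (1 / p) + (c ^ p + d ^ p) ^ (1 / p) := by
  simpa [Fin.sum_univ_two] using
    Real.Lp_add_le_of_nonneg (s := Finset.univ) (f := ![a, b]) (g := ![c, d]) hp
      (by simp [Fin.forall_fin_two, ha, hb]) (by simp [Fin.forall_fin_two, hc, hd])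

section semV

variable (V : Submodule ℝ (StrongDual ℝ L))

theorem semV_nonneg (u : L) : 0 ≤ semV V u :=
  Real.sSup_nonneg (by rintro _ ⟨μ, -, rfl⟩; positivity)

theorem abs_apply_div_norm_le (μ : StrongDual ℝ L) (u : L) : |μ u| / ‖μ‖ ≤ ‖u‖ :=
  div_le_of_le_mul₀ (norm_nonneg _) (norm_nonneg _) ((μ.le_opNorm u).trans_eq (mul_comm _ _))

theorem semV_le_norm (u : L) : semV V u ≤ ‖u‖ :=
  Real.sSup_le (by rintro _ ⟨μ, -, rfl⟩; exact abs_apply_div_norm_le μ u) (norm_nonneg u)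

theorem semV_add_le (x y : L) : semV V (x + y) ≤ semV V x + semV V y := by
  refine Real.sSup_le ?_ (add_nonneg (semV_nonneg V x) (semV_nonneg V y))
  rintro _ ⟨μ, hμ, rfl⟩
  have hle (z : L) : |μ z| / ‖μ‖ ≤ semV V z :=
    le_csSup ⟨‖z‖, by rintro _ ⟨ν, -, rfl⟩; exact abs_apply_div_norm_le ν z⟩ ⟨μ, hμ, rfl⟩
  calc |μ (x + y)| / ‖μ‖ ≤ |μ x| / ‖μ‖ + |μ y| / ‖μ‖ := by
        rw [map_add, ← add_div]
        gcongr
        exact abs_add_le _ _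
    _ ≤ semV V x + semV V y := add_le_add (hle x) (hle y)

theorem semV_smul (c : ℝ) (x : L) : semV V (c • x) = |c| * semV V x := by
  have hfun :
      (fun μ : StrongDual ℝ L => |μ (c • x)| / ‖μ‖) = fun μ => |c| • (|μ x| / ‖μ‖) := by
    funext μ
    rw [map_smul, smul_eq_mul, abs_mul, smul_eq_mul, mul_div_assoc]
  rw [semV, semV, hfun, ← Set.image_image (fun t : ℝ => |c| • t), Set.image_smul,
    Real.sSup_smul_of_nonneg (abs_nonneg c), smul_eq_mul]

theorem semV_le_semV_add_norm_sub (V : Submodule ℝ (StrongDual ℝ L)) (u z : L) :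
    semV V u ≤ semV V z + ‖u - z‖ :=
  calc semV V u = semV V (z + (u - z)) := by rw [add_sub_cancel]
    _ ≤ semV V z + ‖u - z‖ := (semV_add_le V _ _).trans (add_le_add le_rfl (semV_le_norm V _))

end semV

namespace GradDisc

variable {V : Submodule ℝ (StrongDual ℝ L)} {p : ℝ} (D : GradDisc L Lv V p)

theorem dnorm_nonneg (v : D.X) : 0 ≤ D.dnorm v :=
  Real.rpow_nonneg (add_nonneg (Real.rpow_nonneg (semV_nonneg V _) p)
    (Real.rpow_nonneg (norm_nonneg _) p)) _

theorem dnorm_pos {v : D.X} (hv : v ≠ 0) : 0 < D.dnorm v :=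
  (D.dnorm_nonneg v).lt_of_ne fun h => hv (D.dnorm_definite v h.symm)

theorem semV_le_dnorm (hp : 0 < p) (v : D.X) : semV V (D.P v) ≤ D.dnorm v :=
  le_rpow_add_rpow_rpow_one_div_left hp (semV_nonneg V _) (norm_nonneg _)

theorem norm_Gd_le_dnorm (hp : 0 < p) (v : D.X) : ‖D.Gd v‖ ≤ D.dnorm v :=
  le_rpow_add_rpow_rpow_one_div_right hp (semV_nonneg V _) (norm_nonneg _)

theorem dnorm_smul (hp : 0 < p) (c : ℝ) (v : D.X) : D.dnorm (c • v) = |c| * D.dnorm v := by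
  rw [dnorm, dnorm, map_smul, map_smul, semV_smul, norm_smul, Real.norm_eq_abs,
    mul_rpow_add_mul_rpow_rpow_one_div hp (abs_nonneg c) (semV_nonneg V _) (norm_nonneg _)]

theorem dnorm_zero (hp : 0 < p) : D.dnorm 0 = 0 := by
  simpa using D.dnorm_smul hp 0 0

theorem dnorm_add_le (hp : 1 ≤ p) (u v : D.X) : D.dnorm (u + v) ≤ D.dnorm u + D.dnorm v := by
  have hp0 : 0 < p := one_pos.trans_le hp
  calc D.dnorm (u + v)
      ≤ ((semV V (D.P u) + semV V (D.P v)) ^ p + (‖D.Gd u‖ + ‖D.Gd v‖) ^ p) ^ (1 / p) := by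
        rw [dnorm, map_add, map_add]
        exact rpow_add_rpow_rpow_one_div_le_of_le hp0 (semV_nonneg V _) (norm_nonneg _)
          (semV_add_le V _ _) (norm_add_le _ _)
    _ ≤ D.dnorm u + D.dnorm v :=
        add_rpow_add_rpow_rpow_one_div_le hp (semV_nonneg V _) (norm_nonneg _)
          (semV_nonneg V _) (norm_nonneg _)

abbrev toNormedAddCommGroup (hp : 1 ≤ p) : NormedAddCommGroup D.X :=
  AddGroupNorm.toNormedAddCommGroup
    { toFun := D.dnorm
      map_zero' := D.dnorm_zero (one_pos.trans_le hp)
      add_le' := D.dnorm_add_le hp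
      neg' := fun v => by simpa using D.dnorm_smul (one_pos.trans_le hp) (-1) v
      eq_zero_of_map_eq_zero' := D.dnorm_definite }

theorem exists_bound {E : Type*} [SeminormedAddCommGroup E] [NormedSpace ℝ E] (hp : 1 ≤ p)
    (f : D.X →ₗ[ℝ] E) : ∃ K, ∀ v, ‖f v‖ ≤ K * D.dnorm v := by
  let := D.toNormedAddCommGroup hp
  let : NormedSpace ℝ D.X := ⟨fun c v => (D.dnorm_smul (one_pos.trans_le hp) c v).le⟩
  exact ⟨‖LinearMap.toContinuousLinearMap f‖, (LinearMap.toContinuousLinearMap f).le_opNorm⟩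

/-- `C_𝒟` and `W_𝒟` are both operator norms for `‖·‖_𝒟`. -/
def opNorm {E : Type*} [SeminormedAddCommGroup E] [NormedSpace ℝ E] (f : D.X →ₗ[ℝ] E) : ℝ :=
  sSup ((fun v => ‖f v‖ / D.dnorm v) '' {v | v ≠ 0})

variable {E : Type*} [SeminormedAddCommGroup E] [NormedSpace ℝ E]

theorem opNorm_nonneg (f : D.X →ₗ[ℝ] E) : 0 ≤ D.opNorm f :=
  Real.sSup_nonneg (by rintro _ ⟨v, -, rfl⟩; exact div_nonneg (norm_nonneg _) (D.dnorm_nonneg v))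

theorem opNorm_le {f : D.X →ₗ[ℝ] E} {a : ℝ} (ha : 0 ≤ a) (h : ∀ v, ‖f v‖ ≤ a * D.dnorm v) :
    D.opNorm f ≤ a :=
  Real.sSup_le (by rintro _ ⟨v, hv, rfl⟩; exact (div_le_iff₀ (D.dnorm_pos hv)).2 (h v)) ha

theorem norm_le_opNorm_mul (hp : 1 ≤ p) (f : D.X →ₗ[ℝ] E) (v : D.X) :
    ‖f v‖ ≤ D.opNorm f * D.dnorm v := by
  rcases eq_or_ne v 0 with rfl | hv
  · simp [D.dnorm_zero (one_pos.trans_le hp)]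
  obtain ⟨K, hK⟩ := D.exists_bound hp f
  refine (div_le_iff₀ (D.dnorm_pos hv)).1 (le_csSup ⟨K, ?_⟩ ⟨v, hv, rfl⟩)
  rintro _ ⟨u, hu, rfl⟩
  exact (div_le_iff₀ (D.dnorm_pos hu)).2 (hK u)

theorem norm_P_le_CD_mul (hp : 1 ≤ p) (v : D.X) : ‖D.P v‖ ≤ D.CD * D.dnorm v :=
  D.norm_le_opNorm_mul hp D.P v

theorem WDdef_eq_opNorm (φ : StrongDual ℝ Lv) (w : StrongDual ℝ L) :
    D.WDdef φ w = D.opNorm ((φ : Lv →ₗ[ℝ] ℝ) ∘ₗ D.Gd + (w : L →ₗ[ℝ] ℝ) ∘ₗ D.P) :=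
  rfl

theorem WDdef_nonneg (φ : StrongDual ℝ Lv) (w : StrongDual ℝ L) : 0 ≤ D.WDdef φ w :=
  D.opNorm_nonneg ((φ : Lv →ₗ[ℝ] ℝ) ∘ₗ D.Gd + (w : L →ₗ[ℝ] ℝ) ∘ₗ D.P)

theorem abs_le_WDdef_mul (hp : 1 ≤ p) (φ : StrongDual ℝ Lv) (w : StrongDual ℝ L) (v : D.X) :
    |φ (D.Gd v) + w (D.P v)| ≤ D.WDdef φ w * D.dnorm v :=
  D.norm_le_opNorm_mul hp ((φ : Lv →ₗ[ℝ] ℝ) ∘ₗ D.Gd + (w : L →ₗ[ℝ] ℝ) ∘ₗ D.P) v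

theorem WDdef_le_WDdef_add (hp : 1 ≤ p) (φ ψ : StrongDual ℝ Lv) (w ω : StrongDual ℝ L) :
    D.WDdef φ w ≤ D.WDdef ψ ω + (‖φ - ψ‖ + D.CD * ‖w - ω‖) := by
  have hp0 : 0 < p := one_pos.trans_le hp
  rw [WDdef_eq_opNorm D φ w]
  refine D.opNorm_le (by positivity [D.WDdef_nonneg ψ ω, D.opNorm_nonneg D.P]) fun v => ?_
  have hφ : |(φ - ψ) (D.Gd v)| ≤ ‖φ - ψ‖ * D.dnorm v :=
    ((φ - ψ).le_opNorm _).trans (by gcongr; exact D.norm_Gd_le_dnorm hp0 v)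
  have hw : |(w - ω) (D.P v)| ≤ ‖w - ω‖ * (D.CD * D.dnorm v) :=
    ((w - ω).le_opNorm _).trans (by gcongr; exact D.norm_P_le_CD_mul hp v)
  have hψ := D.abs_le_WDdef_mul hp ψ ω v
  calc |φ (D.Gd v) + w (D.P v)|
      = |(ψ (D.Gd v) + ω (D.P v)) + ((φ - ψ) (D.Gd v) + (w - ω) (D.P v))| := by
        simp only [sub_apply]; ring_nf
    _ ≤ |ψ (D.Gd v) + ω (D.P v)| + (|(φ - ψ) (D.Gd v)| + |(w - ω) (D.P v)|) :=
        (abs_add_le _ _).trans (add_le_add le_rfl (abs_add_le _ _))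
    _ ≤ (D.WDdef ψ ω + (‖φ - ψ‖ + D.CD * ‖w - ω‖)) * D.dnorm v := by nlinarith

end GradDisc

theorem Submodule.infDist_le_of_forall_dual {F : Type*} [SeminormedAddCommGroup F]
    [NormedSpace ℝ F] (E : Submodule ℝ F) (x : F) {S : ℝ}
    (h : ∀ Φ : StrongDual ℝ F, (∀ y ∈ E, Φ y = 0) → ‖Φ‖ ≤ 1 → Φ x ≤ S) :
    Metric.infDist x E ≤ S := by
  obtain ⟨g, hg, hgx⟩ := exists_dual_vector'' ℝ (E.mkQ x)
  have hΦ : ‖g.comp E.mkQL‖ ≤ 1 :=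
    ContinuousLinearMap.opNorm_le_bound _ zero_le_one fun y =>
      calc ‖g (E.mkQ y)‖ ≤ 1 * ‖E.mkQ y‖ := g.le_of_opNorm_le hg _
        _ ≤ 1 * ‖y‖ := by gcongr; exact Submodule.Quotient.norm_mk_le E y
  calc Metric.infDist x E = ‖E.mkQ x‖ := (QuotientAddGroup.norm_mk (S := E.toAddSubgroup) x).symm
    _ = g.comp E.mkQL x := by simpa using hgx.symm
    _ ≤ S := h _ (fun y hy => by simp [(Submodule.Quotient.mk_eq_zero E).2 hy]) hΦ

def dualPairing (x : L × Lv) : StrongDual ℝ Lv × StrongDual ℝ L →L[ℝ] ℝ :=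
  (ContinuousLinearMap.apply ℝ ℝ x.2).comp (ContinuousLinearMap.fst ℝ _ _) +
    (ContinuousLinearMap.apply ℝ ℝ x.1).comp (ContinuousLinearMap.snd ℝ _ _)

@[simp]
theorem dualPairing_apply (x : L × Lv) (q : StrongDual ℝ Lv × StrongDual ℝ L) :
    dualPairing x q = q.1 x.2 + q.2 x.1 :=
  rfl

/-- The graph `{(𝐯, D𝐯) : 𝐯 ∈ 𝐖_D}` of `D`, the annihilator of the graph of `G`. -/
def wdSubmodule (WG : Submodule ℝ L) (G : ↥WG →ₗ[ℝ] Lv) :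
    Submodule ℝ (StrongDual ℝ Lv × StrongDual ℝ L) :=
  ⨅ u : WG, (dualPairing ((u : L), G u)).ker

section graph

variable (WG : Submodule ℝ L) (G : ↥WG →ₗ[ℝ] Lv)

theorem mem_wdSubmodule {q : StrongDual ℝ Lv × StrongDual ℝ L} :
    q ∈ wdSubmodule WG G ↔ IsWDpair WG G q.1 q.2 := by
  simp [wdSubmodule, IsWDpair]

theorem isClosed_wdSubmodule :
    IsClosed (wdSubmodule WG G : Set (StrongDual ℝ Lv × StrongDual ℝ L)) := by
  rw [wdSubmodule, Submodule.coe_iInf]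
  exact isClosed_iInter fun u => (dualPairing ((u : L), G u)).isClosed_ker

variable {WG G}

theorem infDist_graph_le_of_forall_dualPairing_le (x : L × Lv) {S : ℝ}
    (h : ∀ q ∈ wdSubmodule WG G, ‖q‖ ≤ 1 → dualPairing x q ≤ S) :
    Metric.infDist x (LinearMap.range (WG.subtype.prod G)) ≤ S := by
  refine Submodule.infDist_le_of_forall_dual _ x fun Φ hΦE hΦ => ?_
  have hsplit (y : L × Lv) :
      dualPairing y (Φ.comp (.inr ℝ L Lv), Φ.comp (.inl ℝ L Lv)) = Φ y := by
    simp [← map_add]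
  rw [← hsplit]
  refine h _ ((mem_wdSubmodule WG G).2 fun u => (hsplit _).trans (hΦE _ ⟨u, rfl⟩)) ?_
  have hinr := ContinuousLinearMap.norm_inr_le_one ℝ L Lv
  have hinl := ContinuousLinearMap.norm_inl_le_one ℝ L Lv
  exact norm_prod_le_iff.2
    ⟨(Φ.opNorm_comp_le _).trans (mul_le_one₀ hΦ (norm_nonneg _) hinr),
      (Φ.opNorm_comp_le _).trans (mul_le_one₀ hΦ (norm_nonneg _) hinl)⟩

theorem norm_le_add_infDist_graph {V : Submodule ℝ (StrongDual ℝ L)} {C : ℝ} (hC : 0 ≤ C)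
    (hWG : ∀ u : ↥WG, ‖(u : L)‖ ≤ C * (semV V u + ‖G u‖)) (z : L) (zv : Lv) :
    ‖z‖ ≤ C * (semV V z + ‖zv‖) +
      (1 + 2 * C) * Metric.infDist (z, zv) (LinearMap.range (WG.subtype.prod G)) := by
  have hK : 0 < 1 + 2 * C := by linarith
  rw [← sub_le_iff_le_add', ← div_le_iff₀' hK]
  refine (Metric.le_infDist ⟨0, zero_mem _⟩).2 ?_
  rintro _ ⟨u, rfl⟩
  rw [div_le_iff₀' hK, sub_le_iff_le_add']
  set d := dist (z, zv) ((WG.subtype.prod G) u)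
  have hz : ‖z - u‖ ≤ d := by rw [← dist_eq_norm]; exact le_max_left _ _
  have hzv : ‖zv - G u‖ ≤ d := by rw [← dist_eq_norm]; exact le_max_right _ _
  have hsemV : semV V u ≤ semV V z + d :=
    (semV_le_semV_add_norm_sub V u z).trans (by rw [norm_sub_rev]; gcongr)
  have hG : ‖G u‖ ≤ ‖zv‖ + d :=
    (norm_le_norm_add_norm_sub' _ zv).trans (by rw [norm_sub_rev]; gcongr)
  calc ‖z‖ ≤ ‖(u : L)‖ + ‖z - u‖ := norm_le_norm_add_norm_sub' _ _
    _ ≤ C * ((semV V z + d) + (‖zv‖ + d)) + d := by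
        gcongr
        exact (hWG u).trans (by gcongr)
    _ = C * (semV V z + ‖zv‖) + (1 + 2 * C) * d := by ring

end graph

section sequence

variable {WG : Submodule ℝ L} {G : ↥WG →ₗ[ℝ] Lv} {V : Submodule ℝ (StrongDual ℝ L)} {p : ℝ}
  {D : ℕ → GradDisc L Lv V p}

theorem LimitConforming.exists_dualPairing_le (hp : 1 ≤ p) (h : LimitConforming WG G D) :
    ∃ K, 0 ≤ K ∧ ∀ m (v : (D m).X), ∀ q ∈ wdSubmodule WG G, ‖q‖ ≤ 1 →
      dualPairing ((D m).P v, (D m).Gd v) q ≤ K * (D m).dnorm v := by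
  set WD := wdSubmodule WG G
  let : SeminormedAddCommGroup WD := WD.seminormedAddCommGroup
  let : NormedSpace ℝ WD := WD.normedSpace
  have : CompleteSpace WD := (isClosed_wdSubmodule WG G).completeSpace_coe
  -- `W_{𝒟_m}(q)` is bounded in `m`, so these functionals are pointwise bounded on `𝐖_D`.
  let g : (Σ m, (D m).X) → WD →L[ℝ] ℝ := fun i =>
    ((D i.1).dnorm i.2)⁻¹ • (dualPairing ((D i.1).P i.2, (D i.1).Gd i.2)).comp WD.subtypeL
  have hg (q : WD) : ∃ B, ∀ i, ‖g i q‖ ≤ B := by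
    obtain ⟨B, hB⟩ := (h q.1.1 q.1.2 ((mem_wdSubmodule WG G).1 q.2)).bddAbove_range
    refine ⟨B, fun ⟨m, v⟩ => ?_⟩
    have hW := (D m).abs_le_WDdef_mul hp q.1.1 q.1.2 v
    calc ‖g ⟨m, v⟩ q‖ = ((D m).dnorm v)⁻¹ * |q.1.1 ((D m).Gd v) + q.1.2 ((D m).P v)| := by
          simp [g, abs_of_nonneg ((D m).dnorm_nonneg v)]
      _ ≤ (D m).WDdef q.1.1 q.1.2 := by
          rcases ((D m).dnorm_nonneg v).eq_or_lt with h0 | hpos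
          · simp [← h0, (D m).WDdef_nonneg]
          · rw [inv_mul_le_iff₀ hpos, mul_comm]
            exact hW
      _ ≤ B := hB ⟨m, rfl⟩
  obtain ⟨K, hK⟩ : ∃ K, ∀ i, ‖g i‖ ≤ K := banach_steinhaus hg
  refine ⟨K, (norm_nonneg _).trans (hK ⟨0, 0⟩), fun m v q hq hq1 => ?_⟩
  rcases ((D m).dnorm_nonneg v).eq_or_lt with h0 | hpos
  · rw [← h0, mul_zero]
    simp [(D m).dnorm_definite v h0.symm]
  have hgq : ‖g ⟨m, v⟩ ⟨q, hq⟩‖ ≤ K := ((g _).le_of_opNorm_le (hK _) _).trans (by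
    simpa using mul_le_of_le_one_right (hK ⟨m, v⟩ |> (norm_nonneg _).trans) hq1)
  calc dualPairing ((D m).P v, (D m).Gd v) q = (D m).dnorm v * g ⟨m, v⟩ ⟨q, hq⟩ := by
        simp [g, mul_inv_cancel_left₀ hpos.ne']
    _ ≤ K * (D m).dnorm v := by
        rw [mul_comm]
        gcongr
        exact (Real.le_norm_self _).trans hgq

theorem LimitConforming.coercive (hp : 1 ≤ p) {C : ℝ} (hC : 0 ≤ C)
    (hWG : ∀ u : ↥WG, ‖(u : L)‖ ≤ C * (semV V u + ‖G u‖)) (h : LimitConforming WG G D) :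
    Coercive D := by
  have hp0 : 0 < p := one_pos.trans_le hp
  obtain ⟨K, hK0, hK⟩ := h.exists_dualPairing_le hp
  refine ⟨2 * C + (1 + 2 * C) * K, fun m => (D m).opNorm_le (by positivity) fun v => ?_⟩
  have hdist := infDist_graph_le_of_forall_dualPairing_le _ (hK m v)
  calc ‖(D m).P v‖
      ≤ C * (semV V ((D m).P v) + ‖(D m).Gd v‖) + (1 + 2 * C) * (K * (D m).dnorm v) :=
        (norm_le_add_infDist_graph hC hWG _ _).trans (by gcongr)
    _ ≤ C * ((D m).dnorm v + (D m).dnorm v) + (1 + 2 * C) * (K * (D m).dnorm v) := by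
        gcongr
        exacts [(D m).semV_le_dnorm hp0 v, (D m).norm_Gd_le_dnorm hp0 v]
    _ = (2 * C + (1 + 2 * C) * K) * (D m).dnorm v := by ring

theorem Coercive.limitConforming (hp : 1 ≤ p) (hD : Coercive D)
    (happrox : ∀ φ w, IsWDpair WG G φ w → ∀ ε > 0, ∃ ψ ω, ‖φ - ψ‖ < ε ∧ ‖w - ω‖ < ε ∧
      Tendsto (fun m => (D m).WDdef ψ ω) atTop (𝓝 0)) :
    LimitConforming WG G D := by
  obtain ⟨C, hC⟩ := hD
  set C₀ := max C 0
  intro φ w hφw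
  refine tendsto_order.2 ⟨fun a ha => .of_forall fun m => ha.trans_le ((D m).WDdef_nonneg _ _),
    fun ε hε => ?_⟩
  obtain ⟨ψ, ω, hψ, hω, hlim⟩ := happrox φ w hφw (ε / 2 / (1 + C₀)) (by positivity)
  filter_upwards [hlim.eventually (gt_mem_nhds (half_pos hε))] with m hm
  have hCD : (D m).CD ≤ C₀ := (hC m).trans (le_max_left _ _)
  calc (D m).WDdef φ w ≤ (D m).WDdef ψ ω + (‖φ - ψ‖ + (D m).CD * ‖w - ω‖) :=
        (D m).WDdef_le_WDdef_add hp φ ψ w ω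
    _ ≤ (D m).WDdef ψ ω + (1 + C₀) * (ε / 2 / (1 + C₀)) := by
        have := mul_le_mul hCD hω.le (norm_nonneg _) (le_max_right C 0)
        linarith
    _ < ε := by
        rw [mul_div_cancel₀ _ (by positivity)]
        linarith

end sequence

theorem limitConforming_iff_coercive_and_dense_subset_general
    (WG : Submodule ℝ L)
    (G : ↥WG →ₗ[ℝ] Lv)
    (p : ℝ) (hp : 1 < p)
    (p' : ℝ) (hpp' : 1 / p + 1 / p' = 1)
    (V : Submodule ℝ (StrongDual ℝ L))
    (CWGV : ℝ) (hCWGV : 0 < CWGV)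
    (hequiv : ∀ u : ↥WG, (‖(u : L)‖ ^ p + ‖G u‖ ^ p) ^ (1 / p) ≤
      CWGV * (semV V (u : L) ^ p + ‖G u‖ ^ p) ^ (1 / p))
    (D : ℕ → GradDisc L Lv V p) :
    LimitConforming WG G D ↔
      (Coercive D ∧
        ∃ Wt : Set (StrongDual ℝ Lv × StrongDual ℝ L),
          (∀ q ∈ Wt, IsWDpair WG G q.1 q.2) ∧
          (∀ (φ : StrongDual ℝ Lv) (w : StrongDual ℝ L), IsWDpair WG G φ w → ∀ ε : ℝ, 0 < ε →
            ∃ q ∈ Wt, (‖φ - q.1‖ ^ p' + ‖w - q.2‖ ^ p') ^ (1 / p') < ε) ∧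
          (∀ q ∈ Wt, Tendsto (fun m => (D m).WDdef q.1 q.2) atTop (𝓝 0))) := by
  have hp0 : 0 < p := one_pos.trans hp
  have hp'0 : 0 < p' := one_div_pos.1 (by linarith [(div_lt_one hp0).2 hp])
  have hWG (u : ↥WG) : ‖(u : L)‖ ≤ CWGV * (semV V u + ‖G u‖) :=
    (le_rpow_add_rpow_rpow_one_div_left hp0 (norm_nonneg _) (norm_nonneg _)).trans <|
      (hequiv u).trans <| by
        gcongr
        exact Real.rpow_add_rpow_le_add (semV_nonneg V _) (norm_nonneg _) hp.le
  constructor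
  · intro h
    refine ⟨h.coercive hp.le hCWGV.le hWG, {q | IsWDpair WG G q.1 q.2}, fun q hq => hq,
      fun φ w hφw ε hε => ⟨(φ, w), hφw, ?_⟩, fun q hq => h q.1 q.2 hq⟩
    simpa [Real.zero_rpow hp'0.ne', Real.zero_rpow (inv_pos.2 hp'0).ne'] using hε
  · rintro ⟨hD, Wt, -, hdense, hWt⟩
    refine hD.limitConforming hp.le fun φ w hφw ε hε => ?_
    obtain ⟨q, hq, hclose⟩ := hdense φ w hφw ε hε
    exact ⟨q.1, q.2,
      (le_rpow_add_rpow_rpow_one_div_left hp'0 (norm_nonneg _) (norm_nonneg _)).trans_lt hclose,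
      (le_rpow_add_rpow_rpow_one_div_right hp'0 (norm_nonneg _) (norm_nonneg _)).trans_lt hclose,
      hWt q hq⟩

theorem limitConforming_iff_coercive_and_dense_subset
    [CompleteSpace L] [CompleteSpace Lv]
    [TopologicalSpace.SeparableSpace L] [TopologicalSpace.SeparableSpace Lv]
    (hreflL : Function.Surjective ⇑(inclusionInDoubleDual ℝ L))
    (hreflLv : Function.Surjective ⇑(inclusionInDoubleDual ℝ Lv))
    (WG : Submodule ℝ L) (hWGdense : Dense (WG : Set L))
    (G : ↥WG →ₗ[ℝ] Lv)
    (hGclosed : IsClosed (Set.range fun u : ↥WG => ((u : L), G u)))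
    (p : ℝ) (hp : 1 < p)
    (p' : ℝ) (hpp' : 1 / p + 1 / p' = 1)
    (V : Submodule ℝ (StrongDual ℝ L)) (hVclosed : IsClosed (V : Set (StrongDual ℝ L)))
    (CWGV : ℝ) (hCWGV : 0 < CWGV)
    (hequiv : ∀ u : ↥WG, (‖(u : L)‖ ^ p + ‖G u‖ ^ p) ^ (1 / p) ≤
      CWGV * (semV V (u : L) ^ p + ‖G u‖ ^ p) ^ (1 / p))
    (D : ℕ → GradDisc L Lv V p) :
    LimitConforming WG G D ↔
      (Coercive D ∧
        ∃ Wt : Set (StrongDual ℝ Lv × StrongDual ℝ L),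
          (∀ q ∈ Wt, IsWDpair WG G q.1 q.2) ∧
          (∀ (φ : StrongDual ℝ Lv) (w : StrongDual ℝ L), IsWDpair WG G φ w → ∀ ε : ℝ, 0 < ε →
            ∃ q ∈ Wt, (‖φ - q.1‖ ^ p' + ‖w - q.2‖ ^ p') ^ (1 / p') < ε) ∧
          (∀ q ∈ Wt, Tendsto (fun m => (D m).WDdef q.1 q.2) atTop (𝓝 0))) :=
  limitConforming_iff_coercive_and_dense_subset_general WG G p hp p' hpp' V CWGV hCWGV hequiv D
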